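/- arXiv:1809.05696 — 2 statements merged into one kernel-verified Lean document; each statement's English description precedes it below -/
import Mathlib

section
/- Let w : ℝ → (0,∞) be a continuous 2π-periodic function that is angle-separable and satisfies max w > min w. Then there exist α₀ ∈ ℝ and θ₁, θ₂ ∈ [0,π) with θ₁ + θ₂ < π such that: (a) for every t ∈ ℝ, w(t) = max w if and only if t ≡ α₀ + θ (mod 2π) for some θ with |θ| ≤ θ₁; and (b) for every t ∈ ℝ, w(t) = min w if and only if t ≡ α₀ + π + θ (mod 2π) for some θ with |θ| ≤ θ₂. In other words, the set of maximum points of the corresponding function on the unit circle is a closed arc centered at angle α₀, the set of minimum points is a closed arc centered at the antipodal angle α₀ + π, and these arcs are disjoint. -/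
/-!
The angles `α` at which reflection across `α` does not decrease `w`, and those at which it does not
increase `w`, form two closed sets covering `ℝ` that are exchanged by `α ↦ α + π`; by connectedness
some `α₀` lies in both, i.e. `w` is symmetric about `α₀`. Two centres of symmetry at distance in
`(0, π)` give `w` a period in `(0, π]`, which together with separability forces `w` to be constant.
So, by connectedness again, one and the same inequality holds at every angle of `(α₀, α₀ + π)`, and
`w` is monotone on `[α₀, α₀ + π]`. After possibly replacing `α₀` by `α₀ + π`, `w` is symmetric about
`α₀` and antitone on `[α₀, α₀ + π]`; by continuity its maximum and minimum sets are closed arcs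
centred at `α₀` and `α₀ + π`, and they are disjoint since `w` is not constant.
-/

open Real Set Function

def ReflLe (w : ℝ → ℝ) (α : ℝ) : Prop := ∀ θ ∈ Ioo 0 π, w (α - θ) ≤ w (α + θ)

def ReflGe (w : ℝ → ℝ) (α : ℝ) : Prop := ∀ θ ∈ Ioo 0 π, w (α + θ) ≤ w (α - θ)

def AngleSeparable (w : ℝ → ℝ) : Prop := ∀ α, ReflLe w α ∨ ReflGe w α

def IsSymmAbout (w : ℝ → ℝ) (α : ℝ) : Prop := ∀ θ, w (α + θ) = w (α - θ)

theorem AntitoneOn.exists_le_iff_le_of_continuousOn {g : ℝ → ℝ} {a b : ℝ} (hab : a ≤ b)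
    (hg : ContinuousOn g (Icc a b)) (hanti : AntitoneOn g (Icc a b)) :
    ∃ x₁ ∈ Icc a b, ∀ x ∈ Icc a b, g a ≤ g x ↔ x ≤ x₁ := by
  set S := Icc a b ∩ g ⁻¹' Ici (g a)
  have hbdd : BddAbove S := bddAbove_Icc.mono inter_subset_left
  have hS : sSup S ∈ S := (hg.preimage_isClosed_of_isClosed isClosed_Icc isClosed_Ici).csSup_mem
    ⟨a, left_mem_Icc.2 hab, le_refl (g a)⟩ hbdd
  exact ⟨sSup S, hS.1, fun x hx =>
    ⟨fun h => le_csSup hbdd ⟨hx, h⟩, fun h => le_trans hS.2 (hanti hx hS.1 h)⟩⟩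

section

variable {w : ℝ → ℝ} {α β c : ℝ}

theorem isClosed_setOf_reflLe (hcont : Continuous w) : IsClosed {α | ReflLe w α} := by
  simp only [ReflLe, ofPred_forall]
  exact isClosed_iInter fun θ => isClosed_iInter fun _ => isClosed_le (by fun_prop) (by fun_prop)

theorem isClosed_setOf_reflGe (hcont : Continuous w) : IsClosed {α | ReflGe w α} := by
  simp only [ReflGe, ofPred_forall]
  exact isClosed_iInter fun θ => isClosed_iInter fun _ => isClosed_le (by fun_prop) (by fun_prop)

theorem pi_sub_mem_Ioo {θ : ℝ} (hθ : θ ∈ Ioo 0 π) : π - θ ∈ Ioo 0 π := by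
  constructor <;> linarith [hθ.1, hθ.2]

theorem ReflLe.reflGe_add_pi (hper : Periodic w (2 * π)) (h : ReflLe w α) : ReflGe w (α + π) :=
  fun θ hθ => by
    convert h (π - θ) (pi_sub_mem_Ioo hθ) using 1
    · rw [← hper (α - (π - θ))]; ring_nf
    · ring_nf

theorem ReflGe.reflLe_add_pi (hper : Periodic w (2 * π)) (h : ReflGe w α) : ReflLe w (α + π) :=
  fun θ hθ => by
    convert h (π - θ) (pi_sub_mem_Ioo hθ) using 1
    · ring_nf
    · rw [← hper (α - (π - θ))]; ring_nf

/-- Symmetry on half a period extends to all of `ℝ`, since `θ ↦ w (α + θ) - w (α - θ)` is odd,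
`p`-periodic and vanishes at `-p / 2`. -/
theorem IsSymmAbout.of_forall_Ioo {p : ℝ} (hper : Periodic w p) (hp : 0 < p)
    (h : ∀ θ ∈ Ioo 0 (p / 2), w (α + θ) = w (α - θ)) : IsSymmAbout w α := by
  set d := fun θ => w (α + θ) - w (α - θ)
  have hd : Periodic d p := fun θ => by
    simp only [d, ← add_assoc, hper (α + θ), sub_add_eq_sub_sub, hper.sub_eq]
  have hd₀ : ∀ θ ∈ Ico (-(p / 2)) (-(p / 2) + p), d θ = 0 := by
    rintro θ ⟨h₁, h₂⟩
    rcases lt_trichotomy θ 0 with hθ | rfl | hθ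
    · rcases h₁.eq_or_lt with rfl | h₁
      · simp only [d, sub_neg_eq_add, sub_eq_zero, ← hper (α + -(p / 2))]
        ring_nf
      · have := h (-θ) ⟨by linarith, by linarith⟩
        simp only [d, sub_neg_eq_add, ← sub_eq_add_neg] at this ⊢
        linarith
    · simp [d]
    · exact sub_eq_zero.2 (h θ ⟨hθ, by linarith⟩)
  intro θ
  obtain ⟨θ', hθ', hdθ⟩ := hd.exists_mem_Ico hp θ (-(p / 2))
  exact sub_eq_zero.1 (hdθ.trans (hd₀ θ' hθ'))

theorem IsSymmAbout.of_reflLe_of_reflGe (hper : Periodic w (2 * π)) (h₁ : ReflLe w α)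
    (h₂ : ReflGe w α) : IsSymmAbout w α :=
  .of_forall_Ioo hper two_pi_pos fun θ hθ => by
    rw [mul_div_cancel_left₀ π two_ne_zero] at hθ
    exact le_antisymm (h₂ θ hθ) (h₁ θ hθ)

theorem IsSymmAbout.periodic (hα : IsSymmAbout w α) (hβ : IsSymmAbout w β) :
    Periodic w (2 * (β - α)) := fun x => by
  rw [show x + 2 * (β - α) = β + (x + β - 2 * α) by ring, hβ, ← sub_sub_cancel α x, ← hα]
  ring_nf

theorem IsSymmAbout.add_pi (hper : Periodic w (2 * π)) (h : IsSymmAbout w α) :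
    IsSymmAbout w (α + π) := fun θ => by
  rw [add_assoc, h, ← hper]
  ring_nf

/-- With a period `c ≤ π`, the reflections across `α` at `θ` and at `c - θ` compare the same two
values in opposite directions, so every `α` is a centre of symmetry. -/
theorem AngleSeparable.eq_of_periodic (hsep : AngleSeparable w) (hc : Periodic w c) (hc₀ : 0 < c)
    (hcπ : c ≤ π) (x y : ℝ) : w x = w y := by
  have hsymm : ∀ α, IsSymmAbout w α := fun α => .of_forall_Ioo hc hc₀ fun θ hθ => by
    have hθ' : θ ∈ Ioo 0 π := ⟨hθ.1, by linarith [hθ.2]⟩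
    have hcθ : c - θ ∈ Ioo 0 π := ⟨by linarith [hθ.2], by linarith [hθ.1]⟩
    have e₁ : w (α - (c - θ)) = w (α + θ) := by rw [← hc]; ring_nf
    have e₂ : w (α + (c - θ)) = w (α - θ) := by rw [← hc.sub_eq]; ring_nf
    rcases hsep α with h | h
    · exact le_antisymm (e₁ ▸ e₂ ▸ h (c - θ) hcθ) (h θ hθ')
    · exact le_antisymm (h θ hθ') (e₁ ▸ e₂ ▸ h (c - θ) hcθ)
  convert (hsymm ((x + y) / 2) ((y - x) / 2)).symm using 2 <;> ring

theorem AngleSeparable.eq_of_isSymmAbout (hsep : AngleSeparable w) (hper : Periodic w (2 * π))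
    (hα : IsSymmAbout w α) (hβ : IsSymmAbout w β) (hαβ : β ∈ Ioo α (α + π)) (x y : ℝ) :
    w x = w y := by
  have hd := hα.periodic hβ
  obtain ⟨h₁, h₂⟩ := hαβ
  rcases le_total (2 * (β - α)) π with h | h
  · exact hsep.eq_of_periodic hd (by linarith) h x y
  · exact hsep.eq_of_periodic (hper.sub_period hd) (by linarith) (by linarith) x y

theorem AngleSeparable.exists_isSymmAbout (hsep : AngleSeparable w) (hcont : Continuous w)
    (hper : Periodic w (2 * π)) : ∃ α, IsSymmAbout w α := by
  by_contra! hno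
  have hdisj : univ ∩ ({α | ReflLe w α} ∩ {α | ReflGe w α}) = ∅ :=
    eq_empty_of_forall_notMem fun α ⟨_, h₁, h₂⟩ => hno α (.of_reflLe_of_reflGe hper h₁ h₂)
  rcases isPreconnected_iff_subset_of_disjoint_closed.1 isPreconnected_univ _ _
    (isClosed_setOf_reflLe hcont) (isClosed_setOf_reflGe hcont) (fun α _ => hsep α) hdisj
    with h | h
  · have := (h (mem_univ 0)).reflGe_add_pi hper
    rw [zero_add] at this
    exact hno π (.of_reflLe_of_reflGe hper (h (mem_univ π)) this)
  · have := (h (mem_univ 0)).reflLe_add_pi hper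
    rw [zero_add] at this
    exact hno π (.of_reflLe_of_reflGe hper this (h (mem_univ π)))

theorem antitoneOn_Icc_of_reflGe (h : ∀ α ∈ Ioo c (c + π), ReflGe w α) :
    AntitoneOn w (Icc c (c + π)) := by
  intro x hx y hy hxy
  rcases hxy.eq_or_lt with rfl | hxy
  · rfl
  · have := h ((x + y) / 2) ⟨by linarith [hx.1], by linarith [hy.2]⟩ ((y - x) / 2)
      ⟨by linarith, by linarith [hx.1, hy.2]⟩
    rwa [show (x + y) / 2 + (y - x) / 2 = y by ring, show (x + y) / 2 - (y - x) / 2 = x by ring]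
      at this

theorem AngleSeparable.exists_isSymmAbout_antitoneOn (hsep : AngleSeparable w)
    (hcont : Continuous w) (hper : Periodic w (2 * π)) (hnc : ∃ s t, w s < w t) :
    ∃ c, IsSymmAbout w c ∧ AntitoneOn w (Icc c (c + π)) := by
  obtain ⟨α, hα⟩ := hsep.exists_isSymmAbout hcont hper
  have hdisj : Ioo α (α + π) ∩ ({β | ReflLe w β} ∩ {β | ReflGe w β}) = ∅ := by
    refine eq_empty_of_forall_notMem fun β ⟨hβ, h₁, h₂⟩ => ?_
    obtain ⟨s, t, hst⟩ := hnc
    exact hst.ne (hsep.eq_of_isSymmAbout hper hα (.of_reflLe_of_reflGe hper h₁ h₂) hβ s t)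
  rcases isPreconnected_iff_subset_of_disjoint_closed.1 isPreconnected_Ioo _ _
    (isClosed_setOf_reflLe hcont) (isClosed_setOf_reflGe hcont) (fun β _ => hsep β) hdisj
    with h | h
  · refine ⟨α + π, hα.add_pi hper, antitoneOn_Icc_of_reflGe fun β hβ => ?_⟩
    have := (h ⟨by linarith [hβ.1], by linarith [hβ.2]⟩ : ReflLe w (β - π)).reflGe_add_pi hper
    rwa [sub_add_cancel] at this
  · exact ⟨α, hα, antitoneOn_Icc_of_reflGe h⟩

theorem IsSymmAbout.monotoneOn_Icc_add_pi (hper : Periodic w (2 * π)) (h : IsSymmAbout w c)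
    (hanti : AntitoneOn w (Icc c (c + π))) : MonotoneOn w (Icc (c + π) (c + π + π)) := by
  have hrefl : ∀ x, w x = w (2 * c + 2 * π - x) := fun x => by
    calc w x = w (c + (x - c)) := by ring_nf
      _ = w (c - (x - c) + 2 * π) := by rw [h, hper]
      _ = w (2 * c + 2 * π - x) := by ring_nf
  intro x hx y hy hxy
  rw [hrefl x, hrefl y]
  exact hanti ⟨by linarith [hy.2], by linarith [hy.1]⟩ ⟨by linarith [hx.2], by linarith [hx.1]⟩
    (by linarith)

theorem exists_eq_add_two_pi_mul (c t : ℝ) :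
    ∃ θ ∈ Icc (-π) π, ∃ k : ℤ, t = c + θ + 2 * π * k := by
  obtain ⟨k, hk, -⟩ := existsUnique_add_zsmul_mem_Ico two_pi_pos t (c - π)
  refine ⟨t + k • (2 * π) - c, ⟨by linarith [hk.1], by linarith [hk.2]⟩, -k, ?_⟩
  rw [zsmul_eq_mul]
  push_cast
  ring

theorem IsSymmAbout.apply_add_two_pi_mul (hper : Periodic w (2 * π)) (h : IsSymmAbout w c)
    (θ : ℝ) (k : ℤ) : w (c + θ + 2 * π * k) = w (c + |θ|) := by
  rw [mul_comm, hper.int_mul k]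
  rcases abs_choice θ with hθ | hθ <;> rw [hθ]
  rw [h, sub_eq_add_neg]

theorem IsSymmAbout.exists_arc_of_antitoneOn (hcont : Continuous w) (hper : Periodic w (2 * π))
    (h : IsSymmAbout w c) (hanti : AntitoneOn w (Icc c (c + π))) :
    ∃ θ₁ ∈ Icc 0 π, ∀ t, (∀ s, w s ≤ w t) ↔ ∃ θ, |θ| ≤ θ₁ ∧ ∃ k : ℤ, t = c + θ + 2 * π * k := by
  have hanti' : AntitoneOn (fun θ => w (c + θ)) (Icc 0 π) := fun x hx y hy hxy =>
    hanti ⟨by linarith [hx.1], by linarith [hx.2]⟩ ⟨by linarith [hy.1], by linarith [hy.2]⟩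
      (by linarith)
  obtain ⟨θ₁, hθ₁, hiff⟩ := hanti'.exists_le_iff_le_of_continuousOn pi_pos.le
    (by fun_prop)
  simp only [add_zero] at hiff
  have habs : ∀ {θ}, θ ∈ Icc (-π) π → |θ| ∈ Icc 0 π := fun hθ => ⟨abs_nonneg _, abs_le.2 hθ⟩
  have hmax : ∀ s, w s ≤ w c := fun s => by
    obtain ⟨θ, hθ, k, rfl⟩ := exists_eq_add_two_pi_mul c s
    rw [h.apply_add_two_pi_mul hper]
    simpa using hanti' ⟨le_rfl, pi_pos.le⟩ (habs hθ) (abs_nonneg θ)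
  refine ⟨θ₁, hθ₁, fun t => ⟨fun ht => ?_, ?_⟩⟩
  · obtain ⟨θ, hθ, k, rfl⟩ := exists_eq_add_two_pi_mul c t
    refine ⟨θ, (hiff _ (habs hθ)).1 ?_, k, rfl⟩
    rw [← h.apply_add_two_pi_mul hper θ k]
    exact ht c
  · rintro ⟨θ, hθ, k, rfl⟩ s
    rw [h.apply_add_two_pi_mul hper]
    exact (hmax s).trans ((hiff _ ⟨abs_nonneg θ, hθ.trans hθ₁.2⟩).2 hθ)

end

theorem stmt_1_general (w : ℝ → ℝ)
    (hcont : Continuous w)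
    (hper : ∀ t, w (t + 2 * Real.pi) = w t)
    (hsep : ∀ α : ℝ,
      (∀ θ ∈ Set.Ioo (0 : ℝ) Real.pi, w (α - θ) ≤ w (α + θ)) ∨
      (∀ θ ∈ Set.Ioo (0 : ℝ) Real.pi, w (α + θ) ≤ w (α - θ)))
    (hnc : ∃ s t : ℝ, w s < w t) :
    ∃ (α₀ θ₁ θ₂ : ℝ), θ₁ ∈ Set.Ico (0 : ℝ) Real.pi ∧ θ₂ ∈ Set.Ico (0 : ℝ) Real.pi ∧
      θ₁ + θ₂ < Real.pi ∧
      (∀ t : ℝ, (∀ s, w s ≤ w t) ↔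
        ∃ θ : ℝ, |θ| ≤ θ₁ ∧ ∃ k : ℤ, t = α₀ + θ + 2 * Real.pi * k) ∧
      (∀ t : ℝ, (∀ s, w t ≤ w s) ↔
        ∃ θ : ℝ, |θ| ≤ θ₂ ∧ ∃ k : ℤ, t = α₀ + Real.pi + θ + 2 * Real.pi * k) := by
  obtain ⟨c, hsymm, hanti⟩ := AngleSeparable.exists_isSymmAbout_antitoneOn hsep hcont hper hnc
  obtain ⟨θ₁, hθ₁, hmax⟩ := hsymm.exists_arc_of_antitoneOn hcont hper hanti
  obtain ⟨θ₂, hθ₂, hmin⟩ := IsSymmAbout.exists_arc_of_antitoneOn (w := fun x => -w x) hcont.neg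
    (fun t => congrArg Neg.neg (hper t)) (fun θ => congrArg Neg.neg (hsymm.add_pi hper θ))
    (hsymm.monotoneOn_Icc_add_pi hper hanti).neg
  simp only [neg_le_neg_iff] at hmin
  have hsum : θ₁ + θ₂ < π := by
    -- otherwise `c + θ₁` lies on both arcs, so the maximum equals the minimum
    by_contra! h
    obtain ⟨s, t, hst⟩ := hnc
    have hM := (hmax (c + θ₁)).2 ⟨θ₁, (abs_of_nonneg hθ₁.1).le, 0, by simp⟩
    have hm := (hmin (c + θ₁)).2
      ⟨θ₁ - π, by rw [abs_of_nonpos (by linarith [hθ₁.2])]; linarith, 0, by simp⟩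
    linarith [hM t, hm s]
  exact ⟨c, θ₁, θ₂, ⟨hθ₁.1, by linarith [hθ₂.1]⟩, ⟨hθ₂.1, by linarith [hθ₁.1]⟩, hsum, hmax, hmin⟩

/-- For a continuous, positive, 2π-periodic, angle-separable, nonconstant
function `w`, the set of maximum points is a closed arc centered at some angle `α₀`,
the set of minimum points is a closed arc centered at the antipodal angle `α₀ + π`,
and these arcs are disjoint (`θ₁ + θ₂ < π`). -/
theorem stmt_1 (w : ℝ → ℝ)
    (hpos : ∀ t, 0 < w t)
    (hcont : Continuous w)
    (hper : ∀ t, w (t + 2 * Real.pi) = w t)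
    (hsep : ∀ α : ℝ,
      (∀ θ ∈ Set.Ioo (0 : ℝ) Real.pi, w (α - θ) ≤ w (α + θ)) ∨
      (∀ θ ∈ Set.Ioo (0 : ℝ) Real.pi, w (α + θ) ≤ w (α - θ)))
    (hnc : ∃ s t : ℝ, w s < w t) :
    ∃ (α₀ θ₁ θ₂ : ℝ), θ₁ ∈ Set.Ico (0 : ℝ) Real.pi ∧ θ₂ ∈ Set.Ico (0 : ℝ) Real.pi ∧
      θ₁ + θ₂ < Real.pi ∧
      (∀ t : ℝ, (∀ s, w s ≤ w t) ↔
        ∃ θ : ℝ, |θ| ≤ θ₁ ∧ ∃ k : ℤ, t = α₀ + θ + 2 * Real.pi * k) ∧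
      (∀ t : ℝ, (∀ s, w t ≤ w s) ↔
        ∃ θ : ℝ, |θ| ≤ θ₂ ∧ ∃ k : ℤ, t = α₀ + Real.pi + θ + 2 * Real.pi * k) :=
  stmt_1_general w hcont hper hsep hnc
end

section
/- Let N ≥ 3, R > 0, let H ⊂ ℝ^N be an open half-space with 0 ∈ ∂H, and let σ_H be the reflection across ∂H. For x, y ∈ H ∩ B_R with x ≠ y, set a = |x − y|, ã = |y − σ_H x|, b = (|x|/R)·|y − R²x/|x|²|, and b̃ = (|σ_H x|/R)·|y − R²σ_H x/|σ_H x|²|. Then ã·b ≥ a·b̃ and b̃ ≥ b (equivalently, ã/a ≥ b̃/b ≥ 1). -/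
/-!
Write `b(x, y) = (|x|/R)·|y − R²x/|x|²|`. Expanding the squares gives
`b(x, y)² = |x|²|y|²/R² − 2⟪x,y⟫ + R²` and `|x − y|² = |x|² − 2⟪x,y⟫ + |y|²`, so
`b² − a² = (R² − |x|²)(R² − |y|²)/R² ≥ 0` on the ball. Both quantities depend on `x` only through
`|x|` and `⟪x,y⟫`; the reflection keeps `|x|` and lowers `⟪x,y⟫` by `2⟪a,x⟫⟪a,y⟫/⟪a,a⟫`, so
`ã² = a² + t` and `b̃² = b² + t` with the same `t ≥ 0`. Hence `b̃ ≥ b`, and `a ≤ b` gives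
`a²(b² + t) ≤ (a² + t)b²`, i.e. `a·b̃ ≤ ã·b`.
-/

open scoped RealInnerProductSpace

noncomputable def reflectHyp0 {E : Type*} [NormedAddCommGroup E] [InnerProductSpace ℝ E]
    (a : E) (x : E) : E :=
  x - ((2 * ⟪a, x⟫) / ⟪a, a⟫) • a

theorem mul_le_mul_of_sq_eq_sq_add {A B A' B' t : ℝ} (hA : 0 ≤ A) (hA' : 0 ≤ A') (hB' : 0 ≤ B')
    (hAB : A ≤ B) (ht : 0 ≤ t) (hA'sq : A' ^ 2 = A ^ 2 + t) (hB'sq : B' ^ 2 = B ^ 2 + t) :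
    A * B' ≤ A' * B := by
  have hB : 0 ≤ B := hA.trans hAB
  refine (sq_le_sq₀ (by positivity) (by positivity)).1 ?_
  calc (A * B') ^ 2 = A ^ 2 * B ^ 2 + A ^ 2 * t := by rw [mul_pow, hB'sq]; ring
    _ ≤ A ^ 2 * B ^ 2 + B ^ 2 * t := by gcongr
    _ = (A' * B) ^ 2 := by rw [mul_pow, hA'sq]; ring

section InnerProductSpace

variable {E : Type*} [NormedAddCommGroup E] [InnerProductSpace ℝ E]

/-- `(|x|/R)·|y − x*|`, where `x* = R²x/|x|²` is the point dual to `x` with respect to `∂B_R`. -/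
noncomputable def inversionDist (R : ℝ) (x y : E) : ℝ :=
  (‖x‖ / R) * ‖y - (R ^ 2 / ‖x‖ ^ 2) • x‖

theorem sq_inversionDist {R : ℝ} (hR : R ≠ 0) {x : E} (hx : x ≠ 0) (y : E) :
    inversionDist R x y ^ 2 = ‖x‖ ^ 2 * ‖y‖ ^ 2 / R ^ 2 - 2 * ⟪x, y⟫ + R ^ 2 := by
  have hnx : ‖x‖ ≠ 0 := norm_ne_zero_iff.mpr hx
  rw [inversionDist, mul_pow, norm_sub_sq_real, real_inner_smul_right, norm_smul,
    Real.norm_eq_abs, abs_of_nonneg (by positivity), real_inner_comm]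
  field_simp

theorem norm_sub_le_inversionDist {R : ℝ} (hR : 0 < R) {x y : E} (hx : x ≠ 0)
    (hxR : ‖x‖ ≤ R) (hyR : ‖y‖ ≤ R) : ‖x - y‖ ≤ inversionDist R x y := by
  refine (sq_le_sq₀ (norm_nonneg _) (by unfold inversionDist; positivity)).1 ?_
  have hgap : 0 ≤ (R ^ 2 - ‖x‖ ^ 2) * (R ^ 2 - ‖y‖ ^ 2) / R ^ 2 := by
    have := pow_le_pow_left₀ (norm_nonneg x) hxR 2
    have := pow_le_pow_left₀ (norm_nonneg y) hyR 2
    apply div_nonneg <;> nlinarith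
  have hdiff : inversionDist R x y ^ 2 - ‖x - y‖ ^ 2
      = (R ^ 2 - ‖x‖ ^ 2) * (R ^ 2 - ‖y‖ ^ 2) / R ^ 2 := by
    rw [sq_inversionDist hR.ne' hx, norm_sub_sq_real]
    field_simp
    ring
  linarith

theorem norm_reflectHyp0 (a x : E) : ‖reflectHyp0 a x‖ = ‖x‖ := by
  refine (sq_eq_sq₀ (norm_nonneg _) (norm_nonneg _)).1 ?_
  rcases eq_or_ne a 0 with rfl | ha
  · simp [reflectHyp0]
  have hna : ‖a‖ ≠ 0 := norm_ne_zero_iff.mpr ha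
  rw [reflectHyp0, norm_sub_sq_real, real_inner_smul_right, norm_smul, Real.norm_eq_abs, mul_pow,
    sq_abs, real_inner_self_eq_norm_sq, real_inner_comm x a]
  field_simp
  ring

theorem inner_reflectHyp0_left (a x y : E) :
    ⟪reflectHyp0 a x, y⟫ = ⟪x, y⟫ - 2 * ⟪a, x⟫ * ⟪a, y⟫ / ⟪a, a⟫ := by
  rw [reflectHyp0, inner_sub_left, real_inner_smul_left]
  ring

theorem sq_norm_sub_reflectHyp0 (a x y : E) :
    ‖y - reflectHyp0 a x‖ ^ 2 = ‖x - y‖ ^ 2 + 4 * ⟪a, x⟫ * ⟪a, y⟫ / ⟪a, a⟫ := by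
  rw [norm_sub_sq_real, norm_sub_sq_real, real_inner_comm, inner_reflectHyp0_left,
    norm_reflectHyp0]
  ring

theorem sq_inversionDist_reflectHyp0 {R : ℝ} (hR : R ≠ 0) (a : E) {x : E} (hx : x ≠ 0) (y : E) :
    inversionDist R (reflectHyp0 a x) y ^ 2
      = inversionDist R x y ^ 2 + 4 * ⟪a, x⟫ * ⟪a, y⟫ / ⟪a, a⟫ := by
  have hσx : reflectHyp0 a x ≠ 0 := by
    rw [← norm_ne_zero_iff, norm_reflectHyp0, norm_ne_zero_iff]
    exact hx
  rw [sq_inversionDist hR hσx, sq_inversionDist hR hx, inner_reflectHyp0_left, norm_reflectHyp0]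
  ring

end InnerProductSpace

theorem stmt_18_general (N : ℕ) (R : ℝ) (hR : 0 < R)
    (a : EuclideanSpace ℝ (Fin N))
    (x y : EuclideanSpace ℝ (Fin N))
    (hxB : x ∈ Metric.closedBall (0 : EuclideanSpace ℝ (Fin N)) R)
    (hyB : y ∈ Metric.closedBall (0 : EuclideanSpace ℝ (Fin N)) R)
    (hxH : 0 < ⟪a, x⟫) (hyH : 0 < ⟪a, y⟫) :
    ‖x - y‖ *
        ((‖reflectHyp0 a x‖ / R) *
          ‖y - (R ^ 2 / ‖reflectHyp0 a x‖ ^ 2) • reflectHyp0 a x‖) ≤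
      ‖y - reflectHyp0 a x‖ * ((‖x‖ / R) * ‖y - (R ^ 2 / ‖x‖ ^ 2) • x‖) ∧
    (‖x‖ / R) * ‖y - (R ^ 2 / ‖x‖ ^ 2) • x‖ ≤
      (‖reflectHyp0 a x‖ / R) *
        ‖y - (R ^ 2 / ‖reflectHyp0 a x‖ ^ 2) • reflectHyp0 a x‖ := by
  have hx : x ≠ 0 := by rintro rfl; simp at hxH
  have ht : 0 ≤ 4 * ⟪a, x⟫ * ⟪a, y⟫ / ⟪a, a⟫ := by
    have := real_inner_self_nonneg (x := a)
    positivity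
  have hb : 0 ≤ inversionDist R x y := by unfold inversionDist; positivity
  have hb' : 0 ≤ inversionDist R (reflectHyp0 a x) y := by unfold inversionDist; positivity
  have hσ := sq_inversionDist_reflectHyp0 hR.ne' a hx y
  constructor
  · exact mul_le_mul_of_sq_eq_sq_add (norm_nonneg _) (norm_nonneg _) hb'
      (norm_sub_le_inversionDist hR hx (mem_closedBall_zero_iff.1 hxB)
        (mem_closedBall_zero_iff.1 hyB)) ht (sq_norm_sub_reflectHyp0 a x y) hσ
  · exact (sq_le_sq₀ hb hb').1 (by linarith)

/-- For `x, y` in `H ∩ B_R` with `x ≠ y`, where `H = {x : ⟪a,x⟫ > 0}` is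
an open half-space through the origin with reflection `σ_H`, setting `a' = |x − y|`,
`ã = |y − σ_H x|`, `b = (|x|/R)·|y − R²x/|x|²|`, `b̃ = (|σ_H x|/R)·|y − R²σ_H x/|σ_H x|²|`,
one has `ã·b ≥ a'·b̃` and `b̃ ≥ b`. -/
theorem stmt_18 (N : ℕ) (hN : 3 ≤ N) (R : ℝ) (hR : 0 < R)
    (a : EuclideanSpace ℝ (Fin N)) (ha : a ≠ 0)
    (x y : EuclideanSpace ℝ (Fin N))
    (hxB : x ∈ Metric.closedBall (0 : EuclideanSpace ℝ (Fin N)) R)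
    (hyB : y ∈ Metric.closedBall (0 : EuclideanSpace ℝ (Fin N)) R)
    (hxH : 0 < ⟪a, x⟫) (hyH : 0 < ⟪a, y⟫) (hxy : x ≠ y) :
    ‖x - y‖ *
        ((‖reflectHyp0 a x‖ / R) *
          ‖y - (R ^ 2 / ‖reflectHyp0 a x‖ ^ 2) • reflectHyp0 a x‖) ≤
      ‖y - reflectHyp0 a x‖ * ((‖x‖ / R) * ‖y - (R ^ 2 / ‖x‖ ^ 2) • x‖) ∧
    (‖x‖ / R) * ‖y - (R ^ 2 / ‖x‖ ^ 2) • x‖ ≤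
      (‖reflectHyp0 a x‖ / R) *
        ‖y - (R ^ 2 / ‖reflectHyp0 a x‖ ^ 2) • reflectHyp0 a x‖ :=
  stmt_18_general N R hR a x y hxB hyB hxH hyH
end
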